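/- Let Y be a complex 3×3 matrix with SVD Y = U_L · diag(y₁, y₂, y₃) · U_R†, 0 ≤ y₁ ≤ y₂ ≤ y₃, y₃² > 2y₂², and let β index a longest column of Y (i.e. (Y†Y)_{ββ} ≥ (Y†Y)_{jj} for all j). Then |U_{R,β3}|² ≥ 1/(X+1) and (|U_{R,β1}|² + |U_{R,β2}|²)/|U_{R,β3}|² ≤ X, where X = (2y₃² − y₂²)/(y₃² − 2y₂²). -/

import Mathlib

/-!
Because `U_L` is unitary, the squared length of column `j` of `Y` is `∑ₖ yₖ² |U_R j k|²`, and
summing over `j` gives `∑ₖ yₖ²`, the columns of `U_R` being unit vectors. The longest column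
therefore carries at least a third of `∑ₖ yₖ²`. Bounding `y₀²` by `y₁²` and using that row `β` of
`U_R` is a unit vector, this forces `y₂² − 2 y₁² ≤ 3 (y₂² − y₁²) |U_R β 2|²`, which is the first
bound; the second is a rearrangement of it.
-/

open Matrix

namespace Matrix

variable {m n 𝕜 : Type*} [Fintype m] [RCLike 𝕜]

theorem conjTranspose_mul_self_apply_self (A : Matrix m n 𝕜) (j : n) :
    (Aᴴ * A) j j = ((∑ k, ‖A k j‖ ^ 2 : ℝ) : 𝕜) := by
  simp [mul_apply, RCLike.conj_mul]

variable [DecidableEq m]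

theorem sum_norm_sq_unitary_mul_apply {U : Matrix m m 𝕜} (hU : U ∈ unitaryGroup m 𝕜)
    (B : Matrix m n 𝕜) (j : n) : ∑ k, ‖(U * B) k j‖ ^ 2 = ∑ k, ‖B k j‖ ^ 2 := by
  have hUU : Uᴴ * U = 1 := mem_unitaryGroup_iff'.mp hU
  have h : (U * B)ᴴ * (U * B) = Bᴴ * B := by
    rw [conjTranspose_mul, Matrix.mul_assoc, ← Matrix.mul_assoc Uᴴ, hUU, Matrix.one_mul]
  exact_mod_cast (conjTranspose_mul_self_apply_self (U * B) j).symm.trans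
    ((congrFun (congrFun h j) j).trans (conjTranspose_mul_self_apply_self B j))

theorem sum_norm_sq_col_of_mem_unitaryGroup {U : Matrix m m 𝕜} (hU : U ∈ unitaryGroup m 𝕜)
    (j : m) : ∑ k, ‖U k j‖ ^ 2 = 1 := by
  simpa [one_apply, apply_ite] using sum_norm_sq_unitary_mul_apply hU 1 j

theorem sum_norm_sq_row_of_mem_unitaryGroup {U : Matrix m m 𝕜} (hU : U ∈ unitaryGroup m 𝕜)
    (i : m) : ∑ k, ‖U i k‖ ^ 2 = 1 := by
  simpa using sum_norm_sq_col_of_mem_unitaryGroup (Unitary.star_mem hU) i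

theorem sum_norm_sq_col_svd {U : Matrix m m 𝕜} (hU : U ∈ unitaryGroup m 𝕜)
    (d : m → 𝕜) (V : Matrix n m 𝕜) (j : n) :
    ∑ k, ‖(U * diagonal d * Vᴴ) k j‖ ^ 2 = ∑ k, ‖d k‖ ^ 2 * ‖V j k‖ ^ 2 := by
  rw [Matrix.mul_assoc, sum_norm_sq_unitary_mul_apply hU]
  simp [diagonal_mul, mul_pow]

theorem sum_le_card_mul_of_forall_le {V : Matrix m m 𝕜} (hV : V ∈ unitaryGroup m 𝕜) (a : m → ℝ)
    (β : m) (hβ : ∀ j, ∑ k, a k * ‖V j k‖ ^ 2 ≤ ∑ k, a k * ‖V β k‖ ^ 2) :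
    ∑ k, a k ≤ Fintype.card m * ∑ k, a k * ‖V β k‖ ^ 2 := by
  calc ∑ k, a k = ∑ j, ∑ k, a k * ‖V j k‖ ^ 2 := by
        rw [Finset.sum_comm]
        simp_rw [← Finset.mul_sum, sum_norm_sq_col_of_mem_unitaryGroup hV, mul_one]
    _ ≤ ∑ _j : m, ∑ k, a k * ‖V β k‖ ^ 2 := Finset.sum_le_sum fun j _ => hβ j
    _ = _ := by simp

end Matrix

theorem sub_two_mul_le_three_mul_of_le_three_mul {a c : Fin 3 → ℝ} (ha0 : 0 ≤ a 0)
    (ha01 : a 0 ≤ a 1) (hc : ∀ k, 0 ≤ c k) (hc1 : ∑ k, c k = 1)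
    (h : ∑ k, a k ≤ 3 * ∑ k, a k * c k) : a 2 - 2 * a 1 ≤ 3 * (a 2 - a 1) * c 2 := by
  simp only [Fin.sum_univ_three] at hc1 h
  nlinarith [mul_le_mul_of_nonneg_right ha01 (hc 0), hc 1]

theorem sub_div_le_of_one_div_add_one_le {X c : ℝ} (hX : 0 < X + 1) (h : 1 / (X + 1) ≤ c) :
    (1 - c) / c ≤ X := by
  have hc : 0 < c := lt_of_lt_of_le (by positivity) h
  rw [sub_div, div_self hc.ne', sub_le_iff_le_add, div_le_iff₀ hc]
  rwa [div_le_iff₀ hX, mul_comm] at h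

theorem longest_column_right_singular_component_bounds_general
    (Y U_L U_R : Matrix (Fin 3) (Fin 3) ℂ) (y : Fin 3 → ℝ) (β : Fin 3)
    (hUL : U_L ∈ Matrix.unitaryGroup (Fin 3) ℂ)
    (hUR : U_R ∈ Matrix.unitaryGroup (Fin 3) ℂ)
    (hy0 : 0 ≤ y 0) (h01 : y 0 ≤ y 1)
    (hgap : 2 * (y 1)^2 < (y 2)^2)
    (hSVD : Y = U_L * Matrix.diagonal (fun i => (y i : ℂ)) * U_Rᴴ)
    (hβ : ∀ j, ∑ k, ‖Y k j‖^2 ≤ ∑ k, ‖Y k β‖^2) :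
    1 / ((2 * (y 2)^2 - (y 1)^2) / ((y 2)^2 - 2 * (y 1)^2) + 1) ≤ ‖U_R β 2‖^2 ∧
    (‖U_R β 0‖^2 + ‖U_R β 1‖^2) / ‖U_R β 2‖^2
      ≤ (2 * (y 2)^2 - (y 1)^2) / ((y 2)^2 - 2 * (y 1)^2) := by
  have hcol : ∀ j, ∑ k, ‖Y k j‖ ^ 2 = ∑ k, y k ^ 2 * ‖U_R j k‖ ^ 2 := fun j => by
    simp [hSVD, sum_norm_sq_col_svd hUL]
  have hrow := sum_norm_sq_row_of_mem_unitaryGroup hUR β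
  have hmean := sum_le_card_mul_of_forall_le hUR (fun k => y k ^ 2) β (by simpa [hcol] using hβ)
  have key := sub_two_mul_le_three_mul_of_le_three_mul (sq_nonneg (y 0))
    (pow_le_pow_left₀ hy0 h01 2) (fun k => sq_nonneg ‖U_R β k‖) hrow (by simpa using hmean)
  have hD : 0 < y 2 ^ 2 - 2 * y 1 ^ 2 := by linarith
  have hT : 0 < 3 * (y 2 ^ 2 - y 1 ^ 2) := by nlinarith [sq_nonneg (y 1)]
  have hX : (2 * y 2 ^ 2 - y 1 ^ 2) / (y 2 ^ 2 - 2 * y 1 ^ 2) + 1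
      = 3 * (y 2 ^ 2 - y 1 ^ 2) / (y 2 ^ 2 - 2 * y 1 ^ 2) := by
    field_simp
    ring
  have hlow : 1 / ((2 * y 2 ^ 2 - y 1 ^ 2) / (y 2 ^ 2 - 2 * y 1 ^ 2) + 1) ≤ ‖U_R β 2‖ ^ 2 := by
    rw [hX, one_div_div, div_le_iff₀ hT]
    linarith
  refine ⟨hlow, ?_⟩
  rw [show ‖U_R β 0‖ ^ 2 + ‖U_R β 1‖ ^ 2 = 1 - ‖U_R β 2‖ ^ 2 by
    rw [Fin.sum_univ_three] at hrow; linarith]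
  exact sub_div_le_of_one_div_add_one_le (by rw [hX]; exact div_pos hT hD) hlow

/-- Lemma 1, right-handed version: for the longest column β of Y,
`|U_{R,β3}|² ≥ 1/(X+1)` and `(|U_{R,β1}|² + |U_{R,β2}|²)/|U_{R,β3}|² ≤ X`. -/
theorem longest_column_right_singular_component_bounds
    (Y U_L U_R : Matrix (Fin 3) (Fin 3) ℂ) (y : Fin 3 → ℝ) (β : Fin 3)
    (hUL : U_L ∈ Matrix.unitaryGroup (Fin 3) ℂ)
    (hUR : U_R ∈ Matrix.unitaryGroup (Fin 3) ℂ)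
    (hy0 : 0 ≤ y 0) (h01 : y 0 ≤ y 1) (h12 : y 1 ≤ y 2)
    (hgap : 2 * (y 1)^2 < (y 2)^2)
    (hSVD : Y = U_L * Matrix.diagonal (fun i => (y i : ℂ)) * U_Rᴴ)
    (hβ : ∀ j, ∑ k, ‖Y k j‖^2 ≤ ∑ k, ‖Y k β‖^2) :
    1 / ((2 * (y 2)^2 - (y 1)^2) / ((y 2)^2 - 2 * (y 1)^2) + 1) ≤ ‖U_R β 2‖^2 ∧
    (‖U_R β 0‖^2 + ‖U_R β 1‖^2) / ‖U_R β 2‖^2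
      ≤ (2 * (y 2)^2 - (y 1)^2) / ((y 2)^2 - 2 * (y 1)^2) :=
  longest_column_right_singular_component_bounds_general Y U_L U_R y β hUL hUR hy0 h01 hgap hSVD hβ
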